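/- arXiv:1112.1131 — 2 statements merged into one kernel-verified Lean document; each statement's English description precedes it below -/
import Mathlib

section
/- Let x_a < x_{a+1} < ... < x_{b+p+1} be distinct points with a ≤ b, and for each integer r with a ≤ r ≤ b+1 let f^{(r)} denote the derivative of the polynomial of degree ≤ p interpolating V at x_r, ..., x_{r+p}. Suppose x* is a common point of all these stencils (i.e., x* = x_k for some b+1 ≤ k ≤ a+p). Then f^{(b+1)}(x*) − f^{(a)}(x*) = Σ_{r=a}^{b} V[x_r,...,x_{r+p+1}] · (x_{r+p+1} − x_r) · Π_{m : x_{r+m} ≠ x*} (x* − x_{r+m}), where the product runs over m = 1,...,p skipping the vanishing factor. -/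
/-!
Two consecutive interpolants, on the stencils `x_r, …, x_{r+p}` and `x_{r+1}, …, x_{r+p+1}`, agree
at the `p` shared nodes, and both have degree at most `p`. Their difference is therefore the nodal
polynomial of the shared nodes times the difference of the leading coefficients, which are the
divided differences `V[x_{r+1}, …, x_{r+p+1}]` and `V[x_r, …, x_{r+p}]`; by the recursion this
difference is `V[x_r, …, x_{r+p+1}] (x_{r+p+1} - x_r)`. The derivative of a nodal polynomial at one
of its nodes `x*` is the product of `x* - x_j` over the other nodes, and summing the one-cell
jumps over `r` telescopes.
-/

/-- Divided differences of the data `V` at the points `x`: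
`dd x V j i = V[x_i, ..., x_{i+j}]`. -/
noncomputable def dd (x V : ℤ → ℝ) : ℕ → ℤ → ℝ
  | 0, i => V i
  | j + 1, i => (dd x V j (i + 1) - dd x V j i) / (x (i + (j : ℤ) + 1) - x i)

open Polynomial Finset Lagrange

theorem Int.sum_Ico_sub {M : Type*} [AddCommGroup M] (f : ℤ → M) {a b : ℤ} (hab : a ≤ b) :
    ∑ i ∈ Ico a b, (f (i + 1) - f i) = f b - f a := by
  induction b, hab using Int.leInduction with
  | base => simp
  | succ b hab ih =>
    rw [← insert_Ico_right_eq_Ico_add_one hab, sum_insert right_notMem_Ico, ih]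
    abel

theorem Int.prod_Icc_filter_add_ne {M : Type*} [CommMonoid M] (f : ℤ → M) (r n k : ℤ) :
    ∏ m ∈ (Icc 1 n).filter (fun m => r + m ≠ k), f (r + m) =
      ∏ j ∈ (Icc (r + 1) (r + n)).erase k, f j := by
  refine prod_nbij' (r + ·) (· - r) ?_ ?_ ?_ ?_ ?_ <;> grind

theorem Lagrange.eq_C_coeff_mul_nodal_of_eval_eq_zero {ι R : Type*} [CommRing R] [IsDomain R]
    {s : Finset ι} {v : ι → R} (hvs : Set.InjOn v s) {q : R[X]} (hq : q.degree ≤ #s)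
    (hzero : ∀ i ∈ s, q.eval (v i) = 0) :
    q = C (q.coeff #s) * nodal s v := by
  rw [← sub_eq_zero]
  refine eq_zero_of_degree_lt_of_eval_index_eq_zero s hvs ?_ fun i hi => by
    simp [hzero i hi, eval_nodal_at_node hi]
  rw [degree_lt_iff_coeff_zero]
  intro m hm
  rcases hm.eq_or_lt with rfl | hlt
  · have hlead : (nodal s v).coeff #s = 1 := by
      simpa [natDegree_nodal] using (nodal_monic (s := s) (v := v)).coeff_natDegree
    simp [hlead]
  · rw [degree_le_iff_coeff_zero] at hq
    simp [hq m (by exact_mod_cast hlt),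
      coeff_eq_zero_of_natDegree_lt (natDegree_nodal (s := s) (v := v) ▸ hlt)]

theorem degree_interpolate_Icc_le {F : Type*} [Field F] {x : ℤ → F} (hx : Function.Injective x)
    (V : ℤ → F) (i : ℤ) (n : ℕ) : (interpolate (Icc i (i + n)) x V).degree ≤ n := by
  have hcard : #(Icc i (i + n)) - 1 = n := by rw [Int.card_Icc]; omega
  exact (degree_interpolate_le V hx.injOn).trans_eq (by rw [hcard])

theorem coeff_interpolate_Icc_eq_dd {x : ℤ → ℝ} (hx : Function.Injective x) (V : ℤ → ℝ)
    (n : ℕ) (i : ℤ) : (interpolate (Icc i (i + n)) x V).coeff n = dd x V n i := by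
  induction n generalizing i with
  | zero => simp [dd]
  | succ n ih =>
    have hvanish (j : ℤ) : (interpolate (Icc j (j + n)) x V).coeff (n + 1) = 0 :=
      coeff_eq_zero_of_degree_lt <| (degree_interpolate_Icc_le hx V j n).trans_lt <| by
        exact_mod_cast n.lt_succ_self
    have herase_right : (Icc i (i + (n + 1 : ℕ))).erase (i + n + 1) = Icc i (i + n) := by
      ext; simp only [mem_erase, mem_Icc]; omega
    have herase_left : (Icc i (i + (n + 1 : ℕ))).erase i = Icc (i + 1) (i + 1 + n) := by
      ext; simp only [mem_erase, mem_Icc]; omega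
    have hne : x i ≠ x (i + n + 1) := hx.ne (by omega)
    rw [interpolate_eq_add_interpolate_erase (r := V) hx.injOn (i := i) (j := i + n + 1)
      (by rw [mem_Icc]; omega) (by rw [mem_Icc]; omega) (by omega), herase_right, herase_left]
    simp only [basisDivisor, mul_left_comm _ (C _), coeff_add, coeff_C_mul, coeff_mul_X_sub_C,
      hvanish, ih, dd]
    field_simp [sub_ne_zero.mpr hne, sub_ne_zero.mpr hne.symm]
    ring

theorem interpolate_Icc_add_one_sub_interpolate_Icc {x : ℤ → ℝ} (hx : Function.Injective x)
    (V : ℤ → ℝ) (r : ℤ) (p : ℕ) :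
    interpolate (Icc (r + 1) (r + 1 + p)) x V - interpolate (Icc r (r + p)) x V =
      C (dd x V (p + 1) r * (x (r + p + 1) - x r)) * nodal (Icc (r + 1) (r + p)) x := by
  have hcard : #(Icc (r + 1) (r + p)) = p := by rw [Int.card_Icc]; omega
  have hdd : dd x V (p + 1) r * (x (r + p + 1) - x r) = dd x V p (r + 1) - dd x V p r :=
    div_mul_cancel₀ _ (sub_ne_zero.mpr (hx.ne (by omega)))
  refine (eq_C_coeff_mul_nodal_of_eval_eq_zero (s := Icc (r + 1) (r + p)) hx.injOn ?_
    fun j hj => ?_).trans ?_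
  · rw [hcard]
    exact (degree_sub_le _ _).trans
      (max_le (degree_interpolate_Icc_le hx V _ p) (degree_interpolate_Icc_le hx V _ p))
  · rw [mem_Icc] at hj
    rw [eval_sub, eval_interpolate_at_node _ hx.injOn (by rw [mem_Icc]; omega),
      eval_interpolate_at_node _ hx.injOn (by rw [mem_Icc]; omega), sub_self]
  · rw [hcard, coeff_sub, coeff_interpolate_Icc_eq_dd hx, coeff_interpolate_Icc_eq_dd hx, hdd]

theorem eval_derivative_interpolate_Icc_add_one_sub {x : ℤ → ℝ} (hx : Function.Injective x)
    (V : ℤ → ℝ) (r k : ℤ) (p : ℕ) (hk : k ∈ Icc (r + 1) (r + p)) :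
    (derivative (interpolate (Icc (r + 1) (r + 1 + p)) x V)).eval (x k) -
        (derivative (interpolate (Icc r (r + p)) x V)).eval (x k) =
      dd x V (p + 1) r * (x (r + p + 1) - x r) *
        ∏ m ∈ (Icc (1 : ℤ) p).filter (fun m => r + m ≠ k), (x k - x (r + m)) := by
  rw [← eval_sub, ← derivative_sub, interpolate_Icc_add_one_sub_interpolate_Icc hx,
    derivative_C_mul, eval_mul, eval_C, eval_nodal_derivative_eval_node_eq hk, eval_nodal,
    Int.prod_Icc_filter_add_ne fun j => x k - x j]

/-- telescoping formula for the jump between the derivatives of the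
interpolants with offsets `a` and `b+1`, evaluated at a point `x* = x_kk` common
to all the intermediate stencils. -/
theorem deriv_telescoping_jump (p : ℕ) (a b : ℤ) (hab : a ≤ b) (x : ℤ → ℝ)
    (hx : StrictMono x) (V : ℝ → ℝ) (kk : ℤ) (hk1 : b + 1 ≤ kk) (hk2 : kk ≤ a + p) :
    (Polynomial.derivative
        (Lagrange.interpolate (Finset.Icc (b + 1) (b + 1 + p)) x fun i => V (x i))).eval (x kk) -
      (Polynomial.derivative
        (Lagrange.interpolate (Finset.Icc a (a + p)) x fun i => V (x i))).eval (x kk) =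
      ∑ r ∈ Finset.Icc a b,
        dd x (fun i => V (x i)) (p + 1) r * (x (r + p + 1) - x r) *
          ∏ m ∈ (Finset.Icc (1 : ℤ) p).filter (fun m => r + m ≠ kk), (x kk - x (r + m)) := by
  let derivAtNode (r : ℤ) : ℝ :=
    (derivative (interpolate (Icc r (r + p)) x fun i => V (x i))).eval (x kk)
  calc derivAtNode (b + 1) - derivAtNode a
      = ∑ r ∈ Ico a (b + 1), (derivAtNode (r + 1) - derivAtNode r) :=
        (Int.sum_Ico_sub derivAtNode (by omega)).symm
    _ = _ := by
      rw [Ico_add_one_right_eq_Icc]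
      refine sum_congr rfl fun r hr => ?_
      rw [mem_Icc] at hr
      exact eval_derivative_interpolate_Icc_add_one_sub hx.injective _ r kk p
        (mem_Icc.mpr ⟨by omega, by omega⟩)
end

section
/- Sign property of p-th order ENO interpolation: given point values v_i = v(x_i) on a strictly increasing grid, let the ENO interpolant select for each point x_i a stencil of p consecutive points containing x_i by the divided-difference rule (extend left if the left (j)-th divided difference is strictly smaller in absolute value, else right), and let f_i be the degree-(p−1) interpolating polynomial. Define v⁻_{i+1/2} = f_i(x_{i+1/2}) and v⁺_{i+1/2} = f_{i+1}(x_{i+1/2}) where x_{i+1/2} = (x_i + x_{i+1})/2. Then (v⁺_{i+1/2} − v⁻_{i+1/2}) has the same sign (weakly) as v_{i+1} − v_i; in particular v_{i+1} = v_i implies v⁺_{i+1/2} = v⁻_{i+1/2}. -/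
/-- ENO interpolation stencil offsets for the grid point `x_i`:
`enoOffsetI x v i j` is the left offset `r_j` of the `j`-point stencil
`{x_{i+r_j}, ..., x_{i+r_j+j-1}}` chosen by the ENO selection procedure applied to
point values `v` at points `x`. -/
noncomputable def enoOffsetI (x v : ℤ → ℝ) (i : ℤ) : ℕ → ℤ
  | 0 => 0
  | 1 => 0
  | j + 2 =>
    let r := enoOffsetI x v i (j + 1)
    if |dd x v (j + 1) (i + r - 1)| < |dd x v (j + 1) (i + r)| then r - 1 else r

open Polynomial Finset Lagrange

theorem le_of_forall_mem_Ico_step {α : Type*} [Preorder α] {G : ℤ → α} {A B : ℤ}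
    (hup : ∀ a ∈ Ico A B, G a ≤ G (a + 1)) (hdown : ∀ a ∈ Ico B A, G (a + 1) ≤ G a) :
    G A ≤ G B := by
  rcases le_total A B with hAB | hBA
  · induction B, hAB using Int.leInduction with
    | base => rfl
    | succ b _ ih =>
      refine (ih (fun a ha ↦ hup a ?_) fun a ha ↦ ?_).trans (hup b (mem_Ico.2 ⟨by omega, by omega⟩))
      all_goals simp only [mem_Ico] at ha ⊢; omega
  · induction A, hBA using Int.leInduction with
    | base => rfl
    | succ a _ ih =>
      refine (hdown a (mem_Ico.2 ⟨by omega, by omega⟩)).trans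
        (ih (fun b hb ↦ ?_) fun b hb ↦ hdown b ?_)
      all_goals simp only [mem_Ico] at hb ⊢; omega

theorem neg_one_zpow_mul_prod_sub_nonneg {x : ℤ → ℝ} (hx : Monotone x) {a i b : ℤ}
    (hai : a ≤ i) (hib : i ≤ b) {y : ℝ} (hy : y ∈ Set.Icc (x i) (x (i + 1))) :
    0 ≤ (-1 : ℝ) ^ (b - i) * ∏ t ∈ Ioc a b, (y - x t) := by
  induction b, hib using Int.leInduction with
  | base =>
    rw [sub_self, zpow_zero, one_mul]
    exact prod_nonneg fun t ht ↦ sub_nonneg.2 ((hx (mem_Ioc.1 ht).2).trans hy.1)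
  | succ b hib ih =>
    rw [← insert_Ioc_right_eq_Ioc_add_one (hai.trans hib), prod_insert (by simp),
      show b + 1 - i = b - i + 1 by ring, zpow_add_one₀ (by norm_num)]
    calc 0 ≤ ((-1 : ℝ) ^ (b - i) * ∏ t ∈ Ioc a b, (y - x t)) * (x (b + 1) - y) :=
          mul_nonneg ih (sub_nonneg.2 (hy.2.trans (hx (by omega))))
      _ = _ := by ring

namespace Lagrange

variable {ι F : Type*} [Field F] [DecidableEq ι] {s : Finset ι} {x : ι → F} {k l : ι}

theorem interpolate_insert_sub_interpolate (hx : Set.InjOn x ↑(insert k s)) (hk : k ∉ s)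
    (r : ι → F) :
    interpolate (insert k s) x r - interpolate s x r =
      C ((interpolate (insert k s) x r).coeff #s) * nodal s x := by
  have hxs : Set.InjOn x s := hx.mono (by simp)
  rw [← sub_eq_zero]
  refine eq_zero_of_degree_lt_of_eval_index_eq_zero s hxs ?_ fun i hi ↦ ?_
  · rw [degree_lt_iff_coeff_zero]
    intro m hm
    rw [coeff_sub, coeff_sub, coeff_C_mul,
      coeff_eq_zero_of_degree_lt ((degree_interpolate_lt r hxs).trans_le (by exact_mod_cast hm))]
    rcases hm.eq_or_lt with rfl | hm
    · rw [← natDegree_nodal (v := x), nodal_monic.coeff_natDegree, natDegree_nodal]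
      ring
    · have hQ := degree_interpolate_lt r hx
      rw [card_insert_of_notMem hk] at hQ
      rw [coeff_eq_zero_of_degree_lt (hQ.trans_le (by exact_mod_cast hm)),
        coeff_eq_zero_of_natDegree_lt (p := nodal s x) (by rwa [natDegree_nodal])]
      ring
  · rw [eval_sub, eval_sub, eval_interpolate_at_node r hx (mem_insert_of_mem hi),
      eval_interpolate_at_node r hxs hi, eval_mul, eval_nodal_at_node hi, mul_zero, sub_self,
      sub_zero]

theorem interpolate_insert_sub_interpolate_insert (hx : Set.InjOn x ↑(insert k (insert l s)))
    (hk : k ∉ s) (hl : l ∉ s) (hkl : k ≠ l) (r : ι → F) :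
    interpolate (insert l s) x r - interpolate (insert k s) x r =
      C ((interpolate (insert k (insert l s)) x r).coeff (#s + 1) * (x l - x k)) * nodal s x := by
  have hcomm : insert l (insert k s) = insert k (insert l s) := insert_comm _ _ _
  have hk' := interpolate_insert_sub_interpolate hx (by simp [hk, hkl]) r
  have hl' := interpolate_insert_sub_interpolate (hcomm ▸ hx) (by simp [hl, hkl.symm]) r
  rw [card_insert_of_notMem hl, nodal_insert_eq_nodal hl] at hk'
  rw [hcomm, card_insert_of_notMem hk, nodal_insert_eq_nodal hk] at hl'
  rw [C_mul, C_sub]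
  linear_combination hl' - hk'

end Lagrange

/-- The ENO choice for the stencil starting at `l`, where `d a` is the divided difference over
the candidate stencil (of the current length) starting at `a`. -/
noncomputable def enoStep (d : ℤ → ℝ) (l : ℤ) : ℤ :=
  if |d (l - 1)| < |d l| then l - 1 else l

theorem enoStep_congr_abs {d d' : ℤ → ℝ} (h : ∀ a, |d a| = |d' a|) (l : ℤ) :
    enoStep d l = enoStep d' l := by
  simp only [enoStep, h]

theorem enoStep_mem_Icc (d : ℤ → ℝ) (l : ℤ) : enoStep d l ∈ Set.Icc (l - 1) l := by
  unfold enoStep; split_ifs <;> constructor <;> omega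

theorem nonneg_of_mem_Ico_enoStep {d e : ℤ → ℝ} (hde : ∀ a, 0 ≤ d a + d (a + 1) → 0 ≤ e a)
    {l r : ℤ} (hd : ∀ a ∈ Ico l r, 0 ≤ d a) {a : ℤ} (ha : a ∈ Ico (enoStep d l) (enoStep d r)) :
    0 ≤ e a := by
  have add_nonneg_of_abs_le {s t : ℝ} (ht : 0 ≤ t) (hst : |s| ≤ |t|) : 0 ≤ s + t := by
    linarith [neg_le_of_abs_le (hst.trans_eq (abs_of_nonneg ht))]
  have extended {l : ℤ} (h : enoStep d l = l - 1) : |d (l - 1)| < |d l| := by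
    unfold enoStep at h; split_ifs at h with hlt; exacts [hlt, by omega]
  have kept {r : ℤ} (h : enoStep d r = r) : |d r| ≤ |d (r - 1)| := by
    unfold enoStep at h; split_ifs at h with hlt; exacts [by omega, not_lt.1 hlt]
  have hl := enoStep_mem_Icc d l
  have hr := enoStep_mem_Icc d r
  rw [mem_Ico] at ha
  simp only [Set.mem_Icc] at hl hr
  apply hde
  by_cases har : a + 1 = r
  · subst har
    have hkept := kept (r := a + 1) (by omega)
    rw [add_sub_cancel_right] at hkept
    have hal : l ≤ a := by
      by_contra h
      have := extended (show enoStep d l = l - 1 by omega)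
      rw [show l = a + 1 by omega, add_sub_cancel_right] at this
      exact this.not_ge hkept
    exact add_comm (d a) _ ▸ add_nonneg_of_abs_le (hd a (mem_Ico.2 ⟨by omega, by omega⟩)) hkept
  · have hnext := hd (a + 1) (mem_Ico.2 ⟨by omega, by omega⟩)
    by_cases hal : a = l - 1
    · subst hal
      have := extended (by omega : enoStep d l = l - 1)
      rw [sub_add_cancel] at hnext ⊢
      exact add_nonneg_of_abs_le hnext this.le
    · exact add_nonneg (hd a (mem_Ico.2 ⟨by omega, by omega⟩)) hnext

theorem nonneg_of_mem_Ico_of_enoStep {s : ℕ → ℤ → ℝ}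
    (hs : ∀ j a, 0 ≤ s j a + s j (a + 1) → 0 ≤ s (j + 1) a) {L R : ℕ → ℤ} {j₀ : ℕ}
    (hL : ∀ j ≥ j₀, L (j + 1) = enoStep (s j) (L j))
    (hR : ∀ j ≥ j₀, R (j + 1) = enoStep (s j) (R j))
    (h₀ : ∀ a ∈ Ico (L j₀) (R j₀), 0 ≤ s j₀ a) : ∀ j ≥ j₀, ∀ a ∈ Ico (L j) (R j), 0 ≤ s j a := by
  intro j hj
  induction j, hj using Nat.le_induction with
  | base => exact h₀
  | succ j hj ih =>
    rw [hL j hj, hR j hj]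
    exact fun a ↦ nonneg_of_mem_Ico_enoStep (hs j) ih

section ENO

variable {x v : ℤ → ℝ}

theorem interpolate_Icc_add_one_sub (hx : StrictMono x) (n : ℕ) (a : ℤ) :
    interpolate (Icc (a + 1) (a + 1 + n)) x v - interpolate (Icc a (a + n)) x v =
      C ((interpolate (Icc a (a + (n + 1 : ℕ))) x v).coeff (n + 1) * (x (a + n + 1) - x a)) *
        nodal (Ioc a (a + n)) x := by
  have hl : insert (a + n + 1) (Ioc a (a + n)) = Icc (a + 1) (a + 1 + n) := by
    ext; simp only [mem_insert, mem_Ioc, mem_Icc]; omega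
  have hk : insert a (Ioc a (a + n)) = Icc a (a + n) := by
    ext; simp only [mem_insert, mem_Ioc, mem_Icc]; omega
  have hkl : insert a (insert (a + n + 1) (Ioc a (a + n))) = Icc a (a + (n + 1 : ℕ)) := by
    ext; simp only [mem_insert, mem_Ioc, mem_Icc]; omega
  have := interpolate_insert_sub_interpolate_insert (s := Ioc a (a + n)) (k := a)
    (l := a + n + 1) hx.injective.injOn (by simp) (by simp) (by omega) v
  rwa [hkl, hl, hk, Int.card_Ioc, add_sub_cancel_left, Int.toNat_natCast] at this

theorem coeff_interpolate_Icc (hx : StrictMono x) (n : ℕ) (a : ℤ) :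
    (interpolate (Icc a (a + n)) x v).coeff n = dd x v n a := by
  induction n generalizing a with
  | zero => simp [dd]
  | succ n ih =>
    have h := congrArg (coeff · n) (interpolate_Icc_add_one_sub (v := v) hx n a)
    have hN : (nodal (Ioc a (a + n)) x).coeff n = 1 := by
      simpa [natDegree_nodal] using (nodal_monic (s := Ioc a (a + n)) (v := x)).coeff_natDegree
    have hw : x (a + n + 1) - x a ≠ 0 := (sub_pos.2 (hx (by omega))).ne'
    simp only [coeff_sub, coeff_C_mul, ih, hN, mul_one] at h
    rw [dd, h, mul_div_cancel_right₀ _ hw]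

theorem eval_interpolate_Icc_add_one_sub (hx : StrictMono x) (n : ℕ) (a : ℤ) (y : ℝ) :
    eval y (interpolate (Icc (a + 1) (a + 1 + n)) x v) - eval y (interpolate (Icc a (a + n)) x v) =
      dd x v (n + 1) a * (x (a + n + 1) - x a) * ∏ t ∈ Ioc a (a + n), (y - x t) := by
  rw [← eval_sub, interpolate_Icc_add_one_sub hx, coeff_interpolate_Icc hx, eval_mul, eval_C,
    eval_nodal]

theorem add_enoOffsetI_succ (c : ℤ) {j : ℕ} (hj : 1 ≤ j) :
    c + enoOffsetI x v c (j + 1) = enoStep (dd x v j) (c + enoOffsetI x v c j) := by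
  obtain ⟨j, rfl⟩ := Nat.exists_eq_add_of_le' hj
  simp only [enoOffsetI, enoStep]
  split_ifs <;> ring

theorem enoOffsetI_succ_mem_Icc (c : ℤ) (j : ℕ) :
    enoOffsetI x v c (j + 1) ∈ Set.Icc (-(j : ℤ)) 0 := by
  induction j with
  | zero => simp [enoOffsetI]
  | succ j ih =>
    have h := enoStep_mem_Icc (dd x v (j + 1)) (c + enoOffsetI x v c (j + 1))
    rw [← add_enoOffsetI_succ c (by omega)] at h
    simp only [Set.mem_Icc] at ih h ⊢
    omega

theorem dd_neg (j : ℕ) (a : ℤ) : dd x (-v) j a = -dd x v j a := by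
  induction j generalizing a with
  | zero => rfl
  | succ j ih => simp only [dd, ih]; ring

theorem enoOffsetI_neg (c : ℤ) : ∀ j, enoOffsetI x (-v) c j = enoOffsetI x v c j
  | 0 | 1 => rfl
  | j + 2 => by simp only [enoOffsetI, enoOffsetI_neg c (j + 1), dd_neg, abs_neg]

/-- For `y` between `x i` and `x (i + 1)` and a stencil `[a, a + j - 1]` containing `i`,
`(-1) ^ (a + j - 1 - i)` is the sign of `∏_{a < t < a + j} (y - x t)`. -/
noncomputable def signedDD (x v : ℤ → ℝ) (i : ℤ) (j : ℕ) (a : ℤ) : ℝ :=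
  (-1) ^ (a + j - 1 - i) * dd x v j a

theorem abs_signedDD (i : ℤ) (j : ℕ) (a : ℤ) : |signedDD x v i j a| = |dd x v j a| := by
  rw [signedDD, abs_mul, abs_neg_one_zpow, one_mul]

theorem signedDD_succ (i : ℤ) (j : ℕ) (a : ℤ) :
    signedDD x v i (j + 1) a =
      (signedDD x v i j (a + 1) + signedDD x v i j a) / (x (a + j + 1) - x a) := by
  have h₁ : a + ((j + 1 : ℕ) : ℤ) - 1 - i = a + j - 1 - i + 1 := by push_cast; ring
  have h₂ : a + 1 + (j : ℤ) - 1 - i = a + j - 1 - i + 1 := by ring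
  rw [signedDD, signedDD, signedDD, dd, h₁, h₂, zpow_add_one₀ (by norm_num)]
  ring

theorem signedDD_succ_nonneg (hx : StrictMono x) {i : ℤ} {j : ℕ} {a : ℤ}
    (h : 0 ≤ signedDD x v i j a + signedDD x v i j (a + 1)) : 0 ≤ signedDD x v i (j + 1) a := by
  rw [signedDD_succ]
  exact div_nonneg (by linarith) (sub_nonneg.2 (hx.monotone (by omega)))

theorem signedDD_succ_nonpos (hx : StrictMono x) {i : ℤ} {j : ℕ} {a : ℤ}
    (h : signedDD x v i j a + signedDD x v i j (a + 1) ≤ 0) : signedDD x v i (j + 1) a ≤ 0 := by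
  rw [signedDD_succ]
  exact div_nonpos_of_nonpos_of_nonneg (by linarith) (sub_nonneg.2 (hx.monotone (by omega)))

theorem eval_interpolate_Icc_add_one_sub_eq_signedDD (hx : StrictMono x) (n : ℕ) (i a : ℤ)
    (y : ℝ) :
    eval y (interpolate (Icc (a + 1) (a + 1 + n)) x v) - eval y (interpolate (Icc a (a + n)) x v) =
      signedDD x v i (n + 1) a *
        ((x (a + n + 1) - x a) * ((-1) ^ (a + n - i) * ∏ t ∈ Ioc a (a + n), (y - x t))) := by
  have hsq : ((-1 : ℝ) ^ (a + n - i)) * (-1) ^ (a + n - i) = 1 := by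
    rw [← mul_zpow]; norm_num
  rw [eval_interpolate_Icc_add_one_sub hx, signedDD,
    show a + ((n + 1 : ℕ) : ℤ) - 1 - i = a + n - i by push_cast; ring]
  linear_combination
    -(dd x v (n + 1) a * (x (a + n + 1) - x a) * ∏ t ∈ Ioc a (a + n), (y - x t)) * hsq

theorem signedDD_sign_on_enoStencils (hx : StrictMono x) {i : ℤ} (hv : v i ≤ v (i + 1))
    (n : ℕ) :
    (∀ a ∈ Ico (i + enoOffsetI x v i (n + 1)) (i + 1 + enoOffsetI x v (i + 1) (n + 1)),
      0 ≤ signedDD x v i (n + 1) a) ∧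
    (∀ a ∈ Ico (i + 1 + enoOffsetI x v (i + 1) (n + 1)) (i + enoOffsetI x v i (n + 1)),
      signedDD x v i (n + 1) a ≤ 0) := by
  have hstep (c : ℤ) (j : ℕ) (hj : j ≥ 1) :
      c + enoOffsetI x v c (j + 1) = enoStep (signedDD x v i j) (c + enoOffsetI x v c j) := by
    rw [add_enoOffsetI_succ c hj]
    exact enoStep_congr_abs (fun a ↦ (abs_signedDD i j a).symm) _
  have hstep_neg (c : ℤ) (j : ℕ) (hj : j ≥ 1) :
      c + enoOffsetI x v c (j + 1) =
        enoStep (fun a ↦ -signedDD x v i j a) (c + enoOffsetI x v c j) := by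
    rw [hstep c j hj]
    exact enoStep_congr_abs (fun a ↦ (abs_neg _).symm) _
  constructor
  · refine nonneg_of_mem_Ico_of_enoStep (s := signedDD x v i) (j₀ := 1)
      (L := fun j ↦ i + enoOffsetI x v i j) (R := fun j ↦ i + 1 + enoOffsetI x v (i + 1) j)
      (fun j a h ↦ signedDD_succ_nonneg hx h) (hstep i) (hstep (i + 1)) ?_ (n + 1) (by omega)
    intro a ha
    simp only [enoOffsetI, add_zero, mem_Ico] at ha
    obtain rfl : a = i := by omega
    simp only [signedDD, dd, Nat.cast_one, Nat.cast_zero, add_zero, add_sub_cancel_right,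
      sub_self, zpow_zero, one_mul]
    exact div_nonneg (sub_nonneg.2 hv) (sub_nonneg.2 (hx.monotone (by omega)))
  · intro a ha
    have := nonneg_of_mem_Ico_of_enoStep (s := fun j a ↦ -signedDD x v i j a) (j₀ := 1)
      (L := fun j ↦ i + 1 + enoOffsetI x v (i + 1) j) (R := fun j ↦ i + enoOffsetI x v i j)
      (fun j a h ↦ neg_nonneg.2 (signedDD_succ_nonpos hx (by linarith [h])))
      (hstep_neg (i + 1)) (hstep_neg i) ?_ (n + 1) (by omega) a ha
    · simpa using this
    · intro a ha
      simp [enoOffsetI] at ha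

noncomputable def enoInterpolant (x v : ℤ → ℝ) (p : ℕ) (i : ℤ) : ℝ[X] :=
  interpolate (Icc (i + enoOffsetI x v i p) (i + enoOffsetI x v i p + ((p - 1 : ℕ) : ℤ))) x v

theorem enoInterpolant_neg (p : ℕ) (i : ℤ) :
    enoInterpolant x (-v) p i = -enoInterpolant x v p i := by
  simp only [enoInterpolant, enoOffsetI_neg, map_neg]

theorem eval_enoInterpolant_le_of_le (hx : StrictMono x) (p : ℕ) {i : ℤ} (hv : v i ≤ v (i + 1))
    {y : ℝ} (hy : y ∈ Set.Icc (x i) (x (i + 1))) :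
    eval y (enoInterpolant x v p i) ≤ eval y (enoInterpolant x v p (i + 1)) := by
  obtain ⟨n, hn, hoff⟩ : ∃ n, p - 1 = n ∧ ∀ c, enoOffsetI x v c p = enoOffsetI x v c (n + 1) :=
    ⟨p - 1, rfl, by rcases p with _ | p <;> intro c <;> rfl⟩
  simp only [enoInterpolant, hn, hoff]
  have hA := enoOffsetI_succ_mem_Icc (x := x) (v := v) i n
  have hB := enoOffsetI_succ_mem_Icc (x := x) (v := v) (i + 1) n
  simp only [Set.mem_Icc] at hA hB
  obtain ⟨hup, hdown⟩ := signedDD_sign_on_enoStencils hx hv n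
  have hweight (a : ℤ) (hai : a ≤ i) (hia : i ≤ a + n) :
      0 ≤ (x (a + n + 1) - x a) * ((-1) ^ (a + n - i) * ∏ t ∈ Ioc a (a + n), (y - x t)) :=
    mul_nonneg (sub_nonneg.2 (hx.monotone (by omega)))
      (neg_one_zpow_mul_prod_sub_nonneg hx.monotone hai hia hy)
  apply le_of_forall_mem_Ico_step (G := fun a ↦ eval y (interpolate (Icc a (a + n)) x v))
  · intro a ha
    have := mem_Ico.1 ha
    rw [← sub_nonneg, eval_interpolate_Icc_add_one_sub_eq_signedDD hx n i a y]
    exact mul_nonneg (hup a ha) (hweight a (by omega) (by omega))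
  · intro a ha
    have := mem_Ico.1 ha
    rw [← sub_nonpos, eval_interpolate_Icc_add_one_sub_eq_signedDD hx n i a y]
    exact mul_nonpos_of_nonpos_of_nonneg (hdown a ha) (hweight a (by omega) (by omega))

end ENO

theorem eno_interpolation_sign_property_general (p : ℕ) (x v : ℤ → ℝ)
    (hx : StrictMono x) (i : ℤ) :
    (v (i + 1) - v i ≥ 0 →
      (Lagrange.interpolate (Finset.Icc (i + 1 + enoOffsetI x v (i + 1) p)
          (i + 1 + enoOffsetI x v (i + 1) p + ((p - 1 : ℕ) : ℤ))) x v).eval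
            ((x i + x (i + 1)) / 2) -
      (Lagrange.interpolate (Finset.Icc (i + enoOffsetI x v i p)
          (i + enoOffsetI x v i p + ((p - 1 : ℕ) : ℤ))) x v).eval
            ((x i + x (i + 1)) / 2) ≥ 0) ∧
    (v (i + 1) - v i ≤ 0 →
      (Lagrange.interpolate (Finset.Icc (i + 1 + enoOffsetI x v (i + 1) p)
          (i + 1 + enoOffsetI x v (i + 1) p + ((p - 1 : ℕ) : ℤ))) x v).eval
            ((x i + x (i + 1)) / 2) -
      (Lagrange.interpolate (Finset.Icc (i + enoOffsetI x v i p)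
          (i + enoOffsetI x v i p + ((p - 1 : ℕ) : ℤ))) x v).eval
            ((x i + x (i + 1)) / 2) ≤ 0) ∧
    (v (i + 1) = v i →
      (Lagrange.interpolate (Finset.Icc (i + 1 + enoOffsetI x v (i + 1) p)
          (i + 1 + enoOffsetI x v (i + 1) p + ((p - 1 : ℕ) : ℤ))) x v).eval
            ((x i + x (i + 1)) / 2) =
      (Lagrange.interpolate (Finset.Icc (i + enoOffsetI x v i p)
          (i + enoOffsetI x v i p + ((p - 1 : ℕ) : ℤ))) x v).eval
            ((x i + x (i + 1)) / 2)) := by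
  have hmid : (x i + x (i + 1)) / 2 ∈ Set.Icc (x i) (x (i + 1)) := by
    have := hx (lt_add_one i)
    constructor <;> linarith
  set m := (x i + x (i + 1)) / 2
  have hle (h : v i ≤ v (i + 1)) := eval_enoInterpolant_le_of_le hx p h hmid
  have hge (h : v (i + 1) ≤ v i) :
      eval m (enoInterpolant x v p (i + 1)) ≤ eval m (enoInterpolant x v p i) := by
    have := eval_enoInterpolant_le_of_le hx p (v := -v) (neg_le_neg h) hmid
    rwa [enoInterpolant_neg, enoInterpolant_neg, eval_neg, eval_neg, neg_le_neg_iff] at this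
  exact ⟨fun h ↦ sub_nonneg.2 (hle (by linarith)), fun h ↦ sub_nonpos.2 (hge (by linarith)),
    fun h ↦ le_antisymm (hge h.le) (hle h.ge)⟩

/-- the sign property of `p`-th order ENO interpolation.  For each
grid point `x_i` the ENO procedure selects a stencil of `p` consecutive points
containing `x_i`; `f_i` is the corresponding interpolating polynomial of degree
`≤ p-1`, evaluated at the midpoints `x_{i±1/2}`. -/
theorem eno_interpolation_sign_property (p : ℕ) (hp : 1 ≤ p) (x v : ℤ → ℝ)
    (hx : StrictMono x) (i : ℤ) :
    (v (i + 1) - v i ≥ 0 →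
      (Lagrange.interpolate (Finset.Icc (i + 1 + enoOffsetI x v (i + 1) p)
          (i + 1 + enoOffsetI x v (i + 1) p + ((p - 1 : ℕ) : ℤ))) x v).eval
            ((x i + x (i + 1)) / 2) -
      (Lagrange.interpolate (Finset.Icc (i + enoOffsetI x v i p)
          (i + enoOffsetI x v i p + ((p - 1 : ℕ) : ℤ))) x v).eval
            ((x i + x (i + 1)) / 2) ≥ 0) ∧
    (v (i + 1) - v i ≤ 0 →
      (Lagrange.interpolate (Finset.Icc (i + 1 + enoOffsetI x v (i + 1) p)
          (i + 1 + enoOffsetI x v (i + 1) p + ((p - 1 : ℕ) : ℤ))) x v).eval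
            ((x i + x (i + 1)) / 2) -
      (Lagrange.interpolate (Finset.Icc (i + enoOffsetI x v i p)
          (i + enoOffsetI x v i p + ((p - 1 : ℕ) : ℤ))) x v).eval
            ((x i + x (i + 1)) / 2) ≤ 0) ∧
    (v (i + 1) = v i →
      (Lagrange.interpolate (Finset.Icc (i + 1 + enoOffsetI x v (i + 1) p)
          (i + 1 + enoOffsetI x v (i + 1) p + ((p - 1 : ℕ) : ℤ))) x v).eval
            ((x i + x (i + 1)) / 2) =
      (Lagrange.interpolate (Finset.Icc (i + enoOffsetI x v i p)
          (i + enoOffsetI x v i p + ((p - 1 : ℕ) : ℤ))) x v).eval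
            ((x i + x (i + 1)) / 2)) :=
  eno_interpolation_sign_property_general p x v hx i
end
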